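/- Probability that a dyadic cube is good: fix $0<\gamma<1$ and an integer $r > \gamma^{-1}$. For the random dyadic grids $\mathcal D^\omega$ with $\omega$ distributed according to the uniform product measure on $(\{0,1\}^d)^{\mathbb Z}$, the probability that a fixed cube $Q \in \mathcal D_k^\omega$ is $r$-good is at least $1 - C_d \gamma^{-1} 2^{-\gamma r}$ for a constant $C_d$ depending only on $d$. -/

import Mathlib

open MeasureTheory Set
open scoped ENNReal

noncomputable section

/-- A cube `Q ∈ 𝒟_k^ω` (of side length `2^{-k}`) is `r`-bad if there are `s ≥ r`
and a coordinate in which the shift vectors `ω_{k+⌊(1-γ)s⌋}, …, ω_{k+s}` all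
agree. -/
def isBad (d : ℕ) (γ : ℝ) (r : ℕ) (ω : ℤ → Fin d → Bool) (k : ℤ) : Prop :=
  ∃ s : ℕ, r ≤ s ∧ ∃ i : Fin d,
    ∀ j₁ ∈ Set.Icc (k + ⌊(1 - γ) * (s : ℝ)⌋) (k + (s : ℤ)),
      ∀ j₂ ∈ Set.Icc (k + ⌊(1 - γ) * (s : ℝ)⌋) (k + (s : ℤ)),
        ω j₁ i = ω j₂ i

/-- A measure on `(\{0,1\}^d)^ℤ` is the uniform product measure iff every
finite cylinder `{ω : ω_j = a_j, j ∈ J}` has measure `(2^d)^{-|J|}`. -/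
def IsUniformProduct (d : ℕ) (μ : Measure (ℤ → Fin d → Bool)) : Prop :=
  ∀ (J : Finset ℤ) (a : ℤ → Fin d → Bool),
    μ {ω | ∀ j ∈ J, ω j = a j} = ((2 : ℝ≥0∞) ^ d)⁻¹ ^ J.card

/-- The random shift `∑_{j : 2^{-j} < ℓQ} 2^{-j} ω_j`, in coordinate `i`,
for a dyadic cube of side length `2^{-k}`. -/
def shiftVal (d : ℕ) (ω : ℤ → Fin d → Bool) (k : ℤ) (i : Fin d) : ℝ :=
  ∑' j : ℤ, if k < j then (2 : ℝ) ^ (-j) * (cond (ω j i) 1 0) else 0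

/-- The cube of the shifted dyadic grid `𝒟^ω` at scale `2^{-k}` with index `m`. -/
def sdSet (d : ℕ) (ω : ℤ → Fin d → Bool) (k : ℤ) (m : Fin d → ℤ) :
    Set (Fin d → ℝ) :=
  {x | ∀ i, (m i : ℝ) * 2 ^ (-k) + shiftVal d ω k i ≤ x i ∧
      x i < ((m i : ℝ) + 1) * 2 ^ (-k) + shiftVal d ω k i}

/-- Index of the shifted dyadic cube of scale `2^{-k}` containing `x`. -/
def sIdx (d : ℕ) (ω : ℤ → Fin d → Bool) (k : ℤ) (x : Fin d → ℝ) : Fin d → ℤ :=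
  fun i => ⌊(x i - shiftVal d ω k i) / 2 ^ (-k)⌋

/-- Conditional expectation of `f` at scale `2^{-k}` for the grid `𝒟^ω`. -/
def sEk (d : ℕ) (ω : ℤ → Fin d → Bool) (k : ℤ) (f : (Fin d → ℝ) → ℝ)
    (x : Fin d → ℝ) : ℝ :=
  (volume (sdSet d ω k (sIdx d ω k x))).toReal⁻¹ *
    ∫ y in sdSet d ω k (sIdx d ω k x), f y

/-- Martingale difference at scale `2^{-k}`: `D_k f = E_{k+1} f - E_k f`
(the sum of the Haar differences `Δ_Q f` over `Q ∈ 𝒟^ω_k`). -/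
def sDk (d : ℕ) (ω : ℤ → Fin d → Bool) (k : ℤ) (f : (Fin d → ℝ) → ℝ)
    (x : Fin d → ℝ) : ℝ :=
  sEk d ω (k + 1) f x - sEk d ω k f x

/-- The bad projection `P^{bad}_ω f = ∑_{Q bad} Δ_Q f` (badness of a cube in
`𝒟^ω_k` depends only on the scale `k` and on `ω`). -/
def Pbad (d : ℕ) (γ : ℝ) (r : ℕ) (ω : ℤ → Fin d → Bool)
    (f : (Fin d → ℝ) → ℝ) (x : Fin d → ℝ) : ℝ :=
  ∑' k : ℤ, Set.indicator {k' : ℤ | isBad d γ r ω k'} (fun k' => sDk d ω k' f x) k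

/-- The good projection `P^{good}_ω f = ∑_{Q good} Δ_Q f`. -/
def Pgood (d : ℕ) (γ : ℝ) (r : ℕ) (ω : ℤ → Fin d → Bool)
    (f : (Fin d → ℝ) → ℝ) (x : Fin d → ℝ) : ℝ :=
  ∑' k : ℤ, Set.indicator {k' : ℤ | ¬ isBad d γ r ω k'} (fun k' => sDk d ω k' f x) k

/-!
A cube of scale `k` can only be `r`-bad if, for some `s = r + t`, some coordinate `i` and some
bit `c`, all the bits `ω j i` with `j` in the window `[k + ⌊(1 - γ) s⌋, k + s]` equal `c`. The
window has at least `γ s + 1` elements, so under the uniform product measure this event has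
probability at most `2^{-(γ s + 1)}`, and a union bound over `(t, i, c)` gives
`P(bad) ≤ d 2^{-γ r} / (1 - 2^{-γ})`. Bernoulli's inequality `2^{-γ} ≤ 1 - γ / 2` bounds the
last factor by `2 / γ`.
-/

section

open scoped Finset

lemma IsUniformProduct.measure_restrict_mem_le {d : ℕ} {μ : Measure (ℤ → Fin d → Bool)}
    (hμ : IsUniformProduct d μ) (J : Finset ℤ) (P : Finset (J → Fin d → Bool)) :
    μ {ω | (fun j : J => ω j) ∈ P} ≤ #P * ((2 : ℝ≥0∞) ^ d)⁻¹ ^ #J := by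
  classical
  let extend (g : J → Fin d → Bool) (j : ℤ) : Fin d → Bool :=
    if h : j ∈ J then g ⟨j, h⟩ else 0
  calc μ {ω | (fun j : J => ω j) ∈ P}
      ≤ μ (⋃ g ∈ P, {ω | ∀ j ∈ J, ω j = extend g j}) :=
        measure_mono fun ω hω => mem_biUnion hω fun j hj => by simp [extend, hj]
    _ ≤ ∑ g ∈ P, μ {ω | ∀ j ∈ J, ω j = extend g j} := measure_biUnion_finset_le _ _
    _ = #P * ((2 : ℝ≥0∞) ^ d)⁻¹ ^ #J := by simp [hμ J]

lemma IsUniformProduct.measure_forall_apply_eq_le {d : ℕ} {μ : Measure (ℤ → Fin d → Bool)}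
    (hμ : IsUniformProduct d μ) (J : Finset ℤ) (i : Fin d) (c : Bool) :
    μ {ω | ∀ j ∈ J, ω j i = c} ≤ 2⁻¹ ^ #J := by
  classical
  obtain ⟨e, rfl⟩ : ∃ e, d = e + 1 := ⟨d - 1, by have := i.pos; omega⟩
  set P : Finset (J → Fin (e + 1) → Bool) :=
    Fintype.piFinset fun _ => {v : Fin (e + 1) → Bool | v i = c}
  have hP : #P = (2 ^ e) ^ #J := by
    have h := Fintype.card_filter_piFinset_const_eq_of_mem (Finset.univ : Finset Bool) i
      (Finset.mem_univ c)
    rw [Fintype.piFinset_univ, Finset.card_univ, Fintype.card_bool, Fintype.card_fin,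
      Nat.add_sub_cancel] at h
    rw [Fintype.card_piFinset, Finset.prod_const, Finset.card_univ, Fintype.card_coe, h]
  calc μ {ω | ∀ j ∈ J, ω j i = c}
      ≤ μ {ω | (fun j : J => ω j) ∈ P} :=
        measure_mono fun ω hω => by simpa [P] using fun j hj => hω j hj
    _ ≤ #P * ((2 : ℝ≥0∞) ^ (e + 1))⁻¹ ^ #J := hμ.measure_restrict_mem_le J P
    _ = 2⁻¹ ^ #J := by
        rw [hP, Nat.cast_pow, Nat.cast_pow, Nat.cast_ofNat, ← mul_pow, ENNReal.inv_pow, pow_succ,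
          ← mul_assoc, ← mul_pow, ENNReal.mul_inv_cancel two_ne_zero ENNReal.ofNat_ne_top,
          one_pow, one_mul]

def badWindow (γ : ℝ) (k : ℤ) (s : ℕ) : Finset ℤ :=
  Finset.Icc (k + ⌊(1 - γ) * (s : ℝ)⌋) (k + (s : ℤ))

lemma le_card_badWindow (γ : ℝ) (k : ℤ) (s : ℕ) : γ * s + 1 ≤ #(badWindow γ k s) := by
  have hcard : k + s + 1 - (k + ⌊(1 - γ) * (s : ℝ)⌋) ≤ (#(badWindow γ k s) : ℤ) := by
    rw [badWindow, Int.card_Icc]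
    exact Int.self_le_toNat _
  have hcard' : ((k + s + 1 - (k + ⌊(1 - γ) * (s : ℝ)⌋) : ℤ) : ℝ) ≤ #(badWindow γ k s) := by
    exact_mod_cast hcard
  push_cast at hcard'
  linarith [Int.floor_le ((1 - γ) * (s : ℝ))]

lemma setOf_isBad_subset (d : ℕ) (γ : ℝ) (r : ℕ) (k : ℤ) :
    {ω : ℤ → Fin d → Bool | isBad d γ r ω k} ⊆
      ⋃ (t : ℕ) (i : Fin d) (c : Bool), {ω | ∀ j ∈ badWindow γ k (r + t), ω j i = c} := by
  rintro ω ⟨s, hrs, i, hagree⟩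
  obtain ⟨t, rfl⟩ := Nat.exists_eq_add_of_le hrs
  simp only [mem_iUnion, mem_ofPred_eq]
  refine ⟨t, i, ω (k + (r + t : ℕ)) i, fun j hj => ?_⟩
  have hj' := Finset.mem_Icc.1 hj
  exact hagree j hj' _ ⟨hj'.1.trans hj'.2, le_rfl⟩

lemma IsUniformProduct.measure_badWindow_le {d : ℕ} {μ : Measure (ℤ → Fin d → Bool)}
    (hμ : IsUniformProduct d μ) (γ : ℝ) (k : ℤ) (s : ℕ) (i : Fin d) (c : Bool) :
    μ {ω | ∀ j ∈ badWindow γ k s, ω j i = c} ≤ 2⁻¹ * ((2 : ℝ≥0∞) ^ (-γ)) ^ s :=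
  calc μ {ω | ∀ j ∈ badWindow γ k s, ω j i = c}
      ≤ 2⁻¹ ^ #(badWindow γ k s) := hμ.measure_forall_apply_eq_le _ i c
    _ = 2⁻¹ ^ (#(badWindow γ k s) : ℝ) := (ENNReal.rpow_natCast _ _).symm
    _ ≤ 2⁻¹ ^ (1 + γ * s) :=
        ENNReal.rpow_le_rpow_of_exponent_ge (by norm_num) (by linarith [le_card_badWindow γ k s])
    _ = 2⁻¹ * ((2 : ℝ≥0∞) ^ (-γ)) ^ s := by
        rw [ENNReal.rpow_add _ _ (by norm_num) (by norm_num), ENNReal.rpow_one, ENNReal.rpow_mul,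
          ENNReal.rpow_natCast, ENNReal.inv_rpow, ← ENNReal.rpow_neg]

lemma IsUniformProduct.measure_isBad_le {d : ℕ} {μ : Measure (ℤ → Fin d → Bool)}
    (hμ : IsUniformProduct d μ) (γ : ℝ) (r : ℕ) (k : ℤ) :
    μ {ω | isBad d γ r ω k} ≤ d * (2 : ℝ≥0∞) ^ (-(γ * r)) * (1 - 2 ^ (-γ))⁻¹ := by
  set x : ℝ≥0∞ := 2 ^ (-γ)
  have hxr : x ^ r = 2 ^ (-(γ * r)) := by rw [← ENNReal.rpow_natCast, ← ENNReal.rpow_mul, neg_mul]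
  calc μ {ω | isBad d γ r ω k}
      ≤ ∑' t : ℕ, ∑ i : Fin d, ∑ c : Bool, μ {ω | ∀ j ∈ badWindow γ k (r + t), ω j i = c} :=
        (measure_mono (setOf_isBad_subset d γ r k)).trans <| (measure_iUnion_le _).trans <|
          ENNReal.tsum_le_tsum fun t => (measure_iUnion_fintype_le _ _).trans <|
            Finset.sum_le_sum fun i _ => measure_iUnion_fintype_le _ _
    _ ≤ ∑' t : ℕ, ∑ i : Fin d, ∑ c : Bool, 2⁻¹ * x ^ (r + t) := by
        gcongr with t i _ c
        exact hμ.measure_badWindow_le γ k (r + t) i c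
    _ = d * x ^ r * ∑' t : ℕ, x ^ t := by
        simp only [Finset.sum_const, Finset.card_univ, Fintype.card_bool, Fintype.card_fin,
          nsmul_eq_mul, pow_add, ← ENNReal.tsum_mul_left]
        refine tsum_congr fun t => ?_
        rw [Nat.cast_ofNat, ← mul_assoc (2 : ℝ≥0∞),
          ENNReal.mul_inv_cancel two_ne_zero ENNReal.ofNat_ne_top, one_mul, mul_assoc]
    _ = d * 2 ^ (-(γ * r)) * (1 - 2 ^ (-γ))⁻¹ := by rw [ENNReal.tsum_geometric, hxr]

lemma Real.two_rpow_neg_le_one_sub_half_mul {γ : ℝ} (h0 : 0 ≤ γ) (h1 : γ ≤ 1) :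
    (2 : ℝ) ^ (-γ) ≤ 1 - γ / 2 := by
  have h := rpow_one_add_le_one_add_mul_self (s := -1 / 2) (by norm_num) h0 h1
  rw [Real.rpow_neg zero_le_two, ← Real.inv_rpow zero_le_two]
  norm_num at h ⊢
  linarith

lemma ENNReal.one_sub_two_rpow_neg_inv_le {γ : ℝ} (h0 : 0 < γ) (h1 : γ ≤ 1) :
    (1 - (2 : ℝ≥0∞) ^ (-γ))⁻¹ ≤ ENNReal.ofReal (2 / γ) := by
  have h : ENNReal.ofReal (γ / 2) ≤ 1 - 2 ^ (-γ) := by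
    rw [← ENNReal.ofReal_ofNat 2, ENNReal.ofReal_rpow_of_pos two_pos, ← ENNReal.ofReal_one,
      ← ENNReal.ofReal_sub _ (by positivity)]
    exact ENNReal.ofReal_le_ofReal (by linarith [Real.two_rpow_neg_le_one_sub_half_mul h0.le h1])
  calc (1 - (2 : ℝ≥0∞) ^ (-γ))⁻¹ ≤ (ENNReal.ofReal (γ / 2))⁻¹ := ENNReal.inv_le_inv.2 h
    _ = ENNReal.ofReal (2 / γ) := by rw [← ENNReal.ofReal_inv_of_pos (by positivity), inv_div]

end

/-- For `0 < γ < 1` and `r > γ⁻¹`, a fixed dyadic cube of the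
random grid is `r`-good with probability at least `1 - C_d γ⁻¹ 2^{-γ r}`. -/
theorem prob_good (d : ℕ) :
    ∃ C : ℝ, 0 < C ∧
      ∀ (γ : ℝ) (r : ℕ), 0 < γ → γ < 1 → γ⁻¹ < (r : ℝ) →
        ∀ (μ : Measure (ℤ → Fin d → Bool)) [IsProbabilityMeasure μ],
          IsUniformProduct d μ →
          ∀ k : ℤ,
            1 - ENNReal.ofReal (C * γ⁻¹ * (2 : ℝ) ^ (-(γ * (r : ℝ)))) ≤
              μ {ω | ¬ isBad d γ r ω k} := by
  refine ⟨2 * d + 1, by positivity, fun γ r hγ0 hγ1 _ μ _ hμ k => ?_⟩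
  have hbad : μ {ω | isBad d γ r ω k} ≤ ENNReal.ofReal ((2 * d + 1) * γ⁻¹ * 2 ^ (-(γ * r))) :=
    calc μ {ω | isBad d γ r ω k} ≤ d * (2 : ℝ≥0∞) ^ (-(γ * r)) * (1 - 2 ^ (-γ))⁻¹ :=
          hμ.measure_isBad_le γ r k
      _ ≤ ENNReal.ofReal (d * 2 ^ (-(γ * r))) * ENNReal.ofReal (2 / γ) := by
          rw [ENNReal.ofReal_mul d.cast_nonneg, ENNReal.ofReal_natCast, ← ENNReal.ofReal_ofNat 2,
            ENNReal.ofReal_rpow_of_pos two_pos, ENNReal.ofReal_ofNat]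
          gcongr
          exact ENNReal.one_sub_two_rpow_neg_inv_le hγ0 hγ1.le
      _ = ENNReal.ofReal (2 * d * γ⁻¹ * 2 ^ (-(γ * r))) := by
          rw [← ENNReal.ofReal_mul (by positivity)]
          ring_nf
      _ ≤ ENNReal.ofReal ((2 * d + 1) * γ⁻¹ * 2 ^ (-(γ * r))) :=
          ENNReal.ofReal_le_ofReal (by gcongr; linarith)
  -- Subadditivity suffices here, so the bad event need not be shown measurable.
  have hcover : 1 ≤ μ {ω | ¬ isBad d γ r ω k} + μ {ω | isBad d γ r ω k} := by
    rw [← measure_univ (μ := μ)]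
    exact (measure_mono fun ω _ => em' (isBad d γ r ω k)).trans (measure_union_le _ _)
  exact (tsub_le_tsub_left hbad 1).trans (tsub_le_iff_right.2 hcover)
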